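/- arXiv:1703.07071 — 6 statements merged into one kernel-verified Lean document; each statement's English description precedes it below -/
import Mathlib

section
/- Let D ⊆ ℝⁿ be open and connected and let F : ℝⁿ × [t₀,∞) ⇉ ℝⁿ be a set-valued map admitting local solutions over D × [t₀,∞). If x : I → ℝⁿ is a maximal solution of the differential inclusion ẋ ∈ F(x,t) whose closure of range is contained in D, and for every finite-length subinterval J ⊆ I the set ⋃_{t∈J} F(x(t),t) is bounded, then x is complete, i.e., I = [t₀,∞). -/
open Filter MeasureTheory Set Topology Metric

noncomputable section

section Core

variable {E : Type*} [NormedAddCommGroup E] [InnerProductSpace ℝ E]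

/-- Clarke generalized directional derivative of `U` at `z` in direction `v`:
`U°(z;v) = limsup_{y→z, h↓0} (U(y+hv) − U(y))/h`. -/
def cDD {G : Type*} [NormedAddCommGroup G] [NormedSpace ℝ G] (U : G → ℝ) (z v : G) : ℝ :=
  limsup (fun p : G × ℝ => (U (p.1 + p.2 • v) - U p.1) / p.2) ((𝓝 z) ×ˢ (𝓝[>] (0:ℝ)))

/-- Clarke regularity of `U` at `z`: for every direction the one-sided directional
derivative exists and equals the Clarke generalized directional derivative. -/
def RegularAt {G : Type*} [NormedAddCommGroup G] [NormedSpace ℝ G] (U : G → ℝ) (z : G) : Prop :=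
  ∀ v, Tendsto (fun h : ℝ => (U (z + h • v) - U z) / h) (𝓝[>] (0:ℝ)) (𝓝 (cDD U z v))

/-- Clarke generalized gradient (autonomous / inner-product space version). -/
def cGrad (U : E → ℝ) (z : E) : Set E :=
  {p | ∀ v, (inner ℝ p v : ℝ) ≤ cDD U z v}

/-- Pairing on `E × ℝ` playing the role of the inner product `pᵀ[q;s]`. -/
def pin (p q : E × ℝ) : ℝ := (inner ℝ p.1 q.1 : ℝ) + p.2 * q.2

/-- Clarke generalized gradient of a time-varying function on `E × ℝ`. -/
def cGradP (U : E × ℝ → ℝ) (z : E × ℝ) : Set (E × ℝ) :=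
  {p | ∀ v, pin p v ≤ cDD U z v}

/-- An interval starting at `τ`, either `[τ,∞)` or `[τ,T)`. -/
def IntervalFrom (I : Set ℝ) (τ : ℝ) : Prop :=
  I = Ici τ ∨ ∃ T, τ < T ∧ I = Ico τ T

/-- `x` is a (locally absolutely continuous, Carathéodory) solution of `ẋ ∈ F(x,t)` on `I`,
with a.e. derivative `x'`. -/
def IsSolOn (F : E → ℝ → Set E) (x x' : ℝ → E) (I : Set ℝ) : Prop :=
  ContinuousOn x I ∧
  (∀ᵐ t, t ∈ I → HasDerivAt x (x' t) t ∧ x' t ∈ F (x t) t) ∧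
  ∀ s ∈ I, ∀ t ∈ I, IntervalIntegrable x' volume s t ∧ x t - x s = ∫ τ in s..t, x' τ

/-- Maximal solution starting at time `τ`: a solution with no proper right extension. -/
def IsMaxSol (F : E → ℝ → Set E) (x x' : ℝ → E) (τ : ℝ) (I : Set ℝ) : Prop :=
  IntervalFrom I τ ∧ IsSolOn F x x' I ∧
  ∀ (y y' : ℝ → E) (J : Set ℝ), IntervalFrom J τ → IsSolOn F y y' J →
    I ⊆ J → (∀ t ∈ I, y t = x t) → J = I

/-- `F` admits local solutions over `D × J`. -/
def AdmitsLocalSols (F : E → ℝ → Set E) (D : Set E) (J : Set ℝ) : Prop :=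
  ∀ y ∈ D, ∀ τ ∈ J, ∃ T, τ < T ∧ ∃ x x' : ℝ → E,
    IsSolOn F x x' (Ico τ T) ∧ x τ = y

/-- The reduction `G_U^F(x,t) = {q ∈ F(x,t) : ∃a, ∀p ∈ ∂U(x,t), pᵀ[q;1] = a}`. -/
def GRed (U : E × ℝ → ℝ) (F : E → ℝ → Set E) (x : E) (t : ℝ) : Set E :=
  {q ∈ F x t | ∃ a : ℝ, ∀ p ∈ cGradP U (x, t), pin p (q, 1) = a}

/-- The `𝒰`-reduced differential inclusion `F̃_𝒰 = ⋂ᵢ G_{Uᵢ}^F`. -/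
def FRed (𝒰 : ℕ → E × ℝ → ℝ) (F : E → ℝ → Set E) (x : E) (t : ℝ) : Set E :=
  ⋂ i, GRed (𝒰 i) F x t

open Classical in
/-- The `𝒰`-generalized derivative of `V` in the directions `F` (time-varying),
valued in `EReal` so that it is `⊥ = −∞` when `F̃_𝒰(x,t) = ∅`. -/
def genD (V : E × ℝ → ℝ) (𝒰 : ℕ → E × ℝ → ℝ) (F : E → ℝ → Set E) (x : E) (t : ℝ) : EReal :=
  if ∀ z, RegularAt V z then
    ⨅ p ∈ cGradP V (x, t), ⨆ q ∈ FRed 𝒰 F x t, ((pin p (q, 1) : ℝ) : EReal)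
  else
    ⨆ p ∈ cGradP V (x, t), ⨆ q ∈ FRed 𝒰 F x t, ((pin p (q, 1) : ℝ) : EReal)

/-- Autonomous reduction. -/
def GRedA (U : E → ℝ) (F : E → Set E) (x : E) : Set E :=
  {q ∈ F x | ∃ a : ℝ, ∀ p ∈ cGrad U x, (inner ℝ p q : ℝ) = a}

/-- Autonomous `𝒰`-reduced inclusion. -/
def FRedA (𝒰 : ℕ → E → ℝ) (F : E → Set E) (x : E) : Set E := ⋂ i, GRedA (𝒰 i) F x

open Classical in
/-- Autonomous `𝒰`-generalized derivative. -/
def genDA (V : E → ℝ) (𝒰 : ℕ → E → ℝ) (F : E → Set E) (x : E) : EReal :=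
  if ∀ z, RegularAt V z then
    ⨅ p ∈ cGrad V x, ⨆ q ∈ FRedA 𝒰 F x, ((inner ℝ p q : ℝ) : EReal)
  else
    ⨆ p ∈ cGrad V x, ⨆ q ∈ FRedA 𝒰 F x, ((inner ℝ p q : ℝ) : EReal)

/-- Positive definiteness on a set containing the origin. -/
def PosDefOn (V : E → ℝ) (D : Set E) : Prop :=
  V 0 = 0 ∧ ∀ x ∈ D, x ≠ 0 → 0 < V x

/-- `F : E ⇉ E` (autonomous) viewed as a time-varying map. -/
def auton (F : E → Set E) : E → ℝ → Set E := fun x _ => F x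

/-- Local boundedness of an autonomous set-valued map on `D`. -/
def LocBddA (F : E → Set E) (D : Set E) : Prop :=
  ∀ x ∈ D, ∃ ε > 0, ∃ M, ∀ y ∈ ball x ε, ∀ v ∈ F y, ‖v‖ ≤ M

/-- Local boundedness of a time-varying set-valued map on `D × [t₀,∞)`. -/
def LocBdd (F : E → ℝ → Set E) (D : Set E) (t₀ : ℝ) : Prop :=
  ∀ x ∈ D, ∀ t ∈ Ici t₀, ∃ ε > 0, ∃ M, ∀ y ∈ ball x ε, ∀ s ∈ Ici t₀ ∩ ball t ε,
    ∀ v ∈ F y s, ‖v‖ ≤ M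

/-- Outer semicontinuity of an autonomous set-valued map over `D`. -/
def OuterSC (F : E → Set E) (D : Set E) : Prop :=
  ∀ x ∈ D, ∀ (u v : ℕ → E), Tendsto u atTop (𝓝 x) → (∀ i, v i ∈ F (u i)) →
    ∀ y, Tendsto v atTop (𝓝 y) → y ∈ F x

/-- Weak forward invariance of `A` for the autonomous inclusion `ẋ ∈ F(x)`. -/
def WeakInv (F : E → Set E) (A : Set E) : Prop :=
  ∀ x₀ ∈ A, ∃ x x' I, IsMaxSol (auton F) x x' 0 I ∧ x 0 = x₀ ∧ ∀ t ∈ I, x t ∈ A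

/-- Strong forward invariance of `A` for the autonomous inclusion `ẋ ∈ F(x)`. -/
def StrongInv (F : E → Set E) (A : Set E) : Prop :=
  ∀ x x' I, IsMaxSol (auton F) x x' 0 I → x 0 ∈ A → ∀ t ∈ I, x t ∈ A

end Core

/-! If the maximal interval were `[t₀, T)`, the velocity would be bounded on it, hence integrable
up to `T`, so `x` would have the left limit `x t₀ + ∫ t₀..T, x'` at `T`. That limit lies in the
closure of the range, hence in `D`, so a local solution starts from it at time `T`; glued after `x`
it is a solution on a strictly longer interval, contradicting maximality. -/

section Primitive

variable {E : Type*} [NormedAddCommGroup E] [NormedSpace ℝ E] {w w' : ℝ → E} {a b : ℝ}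

theorem forall_sub_eq_integral_of_base {I : Set ℝ}
    (h : ∀ t ∈ I, IntervalIntegrable w' volume a t ∧ w t - w a = ∫ τ in a..t, w' τ) :
    ∀ s ∈ I, ∀ t ∈ I, IntervalIntegrable w' volume s t ∧ w t - w s = ∫ τ in s..t, w' τ := by
  intro s hs t ht
  obtain ⟨hs_int, hs_eq⟩ := h s hs
  obtain ⟨ht_int, ht_eq⟩ := h t ht
  refine ⟨hs_int.symm.trans ht_int, ?_⟩
  rw [← intervalIntegral.integral_interval_sub_left ht_int hs_int, ← hs_eq, ← ht_eq]
  abel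

theorem tendsto_nhdsLT_of_eq_primitive (hab : a < b) (hint : IntervalIntegrable w' volume a b)
    (h : ∀ t ∈ Ico a b, w t - w a = ∫ τ in a..t, w' τ) :
    Tendsto w (𝓝[<] b) (𝓝 (w a + ∫ τ in a..b, w' τ)) := by
  have hprim := intervalIntegral.continuousOn_primitive_interval' hint left_mem_uIcc
  rw [uIcc_of_le hab.le] at hprim
  rw [← nhdsWithin_Ico_eq_nhdsLT hab]
  refine (((hprim b (right_mem_Icc.2 hab.le)).mono Ico_subset_Icc_self).const_add (w a)).congr' ?_
  filter_upwards [self_mem_nhdsWithin] with t ht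
  rw [← h t ht, add_sub_cancel]

theorem continuousOn_Ico_of_eq_primitive
    (h : ∀ t ∈ Ico a b, IntervalIntegrable w' volume a t ∧ w t - w a = ∫ τ in a..t, w' τ) :
    ContinuousOn w (Ico a b) := by
  intro t ht
  obtain ⟨c, htc, hcb⟩ := exists_between ht.2
  have hac : a ≤ c := ht.1.trans htc.le
  have hprim := intervalIntegral.continuousOn_primitive_interval' (h c ⟨hac, hcb⟩).1 left_mem_uIcc
  rw [uIcc_of_le hac] at hprim
  have hEq : EqOn w (fun s => w a + ∫ τ in a..s, w' τ) (Ico a c) := fun s hs => by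
    simp only [← (h s ⟨hs.1, hs.2.trans hcb⟩).2, add_sub_cancel]
  have hw : ContinuousWithinAt w (Ico a c) t :=
    (((hprim t ⟨ht.1, htc.le⟩).mono Ico_subset_Icc_self).const_add (w a)).congr hEq
      (hEq ⟨ht.1, htc⟩)
  rwa [← min_eq_right hcb.le, ← Ico_inter_Iio, continuousWithinAt_inter (Iio_mem_nhds htc)] at hw

end Primitive

namespace IsSolOn

variable {E : Type*} [NormedAddCommGroup E] [InnerProductSpace ℝ E] {F : E → ℝ → Set E}
  {x x' z z' : ℝ → E} {a T T' : ℝ}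

theorem locallyIntegrableOn_Ico (hx : IsSolOn F x x' (Ico a T)) :
    LocallyIntegrableOn x' (Ico a T) := by
  intro t ht
  obtain ⟨c, htc, hcT⟩ := exists_between ht.2
  have hac : a ≤ c := ht.1.trans htc.le
  refine ⟨Icc a c, mem_nhdsWithin.2 ⟨Iio c, isOpen_Iio, htc, fun s hs => ⟨hs.2.1, hs.1.le⟩⟩, ?_⟩
  rw [← intervalIntegrable_iff_integrableOn_Icc_of_le hac]
  exact (hx.2.2 a ⟨le_rfl, hac.trans_lt hcT⟩ c ⟨hac, hcT⟩).1

theorem intervalIntegrable_of_norm_le (hx : IsSolOn F x x' (Ico a T)) (haT : a ≤ T) {M : ℝ}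
    (hM : ∀ t ∈ Ico a T, ∀ v ∈ F (x t) t, ‖v‖ ≤ M) : IntervalIntegrable x' volume a T := by
  rw [intervalIntegrable_iff_integrableOn_Ico_of_le haT]
  refine ⟨hx.locallyIntegrableOn_Ico.aestronglyMeasurable,
    .restrict_of_bounded (C := M) measure_Ico_lt_top ?_⟩
  rw [ae_restrict_iff' measurableSet_Ico]
  filter_upwards [hx.2.1] with t ht hmem using hM t hmem _ (ht hmem).2

theorem tendsto_nhdsLT (hx : IsSolOn F x x' (Ico a T)) (haT : a < T)
    (hint : IntervalIntegrable x' volume a T) :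
    Tendsto x (𝓝[<] T) (𝓝 (x a + ∫ τ in a..T, x' τ)) :=
  tendsto_nhdsLT_of_eq_primitive haT hint fun t ht => (hx.2.2 a ⟨le_rfl, haT⟩ t ht).2

theorem piecewise_Iio (hx : IsSolOn F x x' (Ico a T)) (haT : a < T)
    (hint : IntervalIntegrable x' volume a T) (hz : IsSolOn F z z' (Ico T T')) (hTT' : T < T')
    (hzT : z T = x a + ∫ τ in a..T, x' τ) :
    IsSolOn F ((Iio T).piecewise x z) ((Iio T).piecewise x' z') (Ico a T') := by
  set w := (Iio T).piecewise x z
  set w' := (Iio T).piecewise x' z'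
  have hwx : ∀ t < T, w t = x t := fun t ht => piecewise_eq_of_mem (Iio T) x z ht
  have hwz : ∀ t, T ≤ t → w t = z t := fun t ht => piecewise_eq_of_notMem (Iio T) x z (not_lt.2 ht)
  have hw'x : ∀ b ≤ T, EqOn w' x' (Ioo a b) := fun b hb s hs =>
    piecewise_eq_of_mem (Iio T) x' z' (hs.2.trans_le hb)
  have hw'z : ∀ b, EqOn w' z' (Ioo T b) := fun b s hs =>
    piecewise_eq_of_notMem (Iio T) x' z' (not_lt.2 hs.1.le)
  have hbase : ∀ t ∈ Ico a T',
      IntervalIntegrable w' volume a t ∧ w t - w a = ∫ τ in a..t, w' τ := by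
    intro t ht
    rcases lt_or_ge t T with htT | hTt
    · obtain ⟨hi, he⟩ := hx.2.2 a ⟨le_rfl, haT⟩ t ⟨ht.1, htT⟩
      refine ⟨hi.congr_uIoo ((uIoo_of_le ht.1).symm ▸ (hw'x t htT.le).symm), ?_⟩
      rw [intervalIntegral.integral_congr_Ioo_of_le ht.1 (hw'x t htT.le), hwx a haT, hwx t htT, he]
    · obtain ⟨hi, he⟩ := hz.2.2 T ⟨le_rfl, hTT'⟩ t ⟨hTt, ht.2⟩
      have hiT : IntervalIntegrable w' volume a T :=
        hint.congr_uIoo ((uIoo_of_le haT.le).symm ▸ (hw'x T le_rfl).symm)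
      have hit : IntervalIntegrable w' volume T t :=
        hi.congr_uIoo ((uIoo_of_le hTt).symm ▸ (hw'z t).symm)
      refine ⟨hiT.trans hit, ?_⟩
      rw [← intervalIntegral.integral_add_adjacent_intervals hiT hit,
        intervalIntegral.integral_congr_Ioo_of_le haT.le (hw'x T le_rfl),
        intervalIntegral.integral_congr_Ioo_of_le hTt (hw'z t), ← he, ← sub_eq_iff_eq_add'.2 hzT,
        hwx a haT, hwz t hTt]
      abel
  refine ⟨continuousOn_Ico_of_eq_primitive hbase, ?_, forall_sub_eq_integral_of_base hbase⟩
  filter_upwards [hx.2.1, hz.2.1, volume.ae_ne T] with t hxt hzt htT ht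
  rcases htT.lt_or_gt with htT | hTt
  · obtain ⟨hd, hmem⟩ := hxt ⟨ht.1, htT⟩
    have hwx_nhds : w =ᶠ[𝓝 t] x := piecewise_eqOn _ _ _ |>.eventuallyEq_of_mem (Iio_mem_nhds htT)
    rw [show w' t = x' t from piecewise_eq_of_mem (Iio T) x' z' htT, hwx t htT]
    exact ⟨hd.congr_of_eventuallyEq hwx_nhds, hmem⟩
  · obtain ⟨hd, hmem⟩ := hzt ⟨hTt.le, ht.2⟩
    have hwz_nhds : w =ᶠ[𝓝 t] z := (piecewise_eqOn_compl _ _ _).eventuallyEq_of_mem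
      (mem_of_superset (Ioi_mem_nhds hTt) fun s (hs : T < s) => not_lt.2 hs.le)
    rw [show w' t = z' t from piecewise_eq_of_notMem (Iio T) x' z' (not_lt.2 hTt.le),
      hwz t hTt.le]
    exact ⟨hd.congr_of_eventuallyEq hwz_nhds, hmem⟩

end IsSolOn

theorem IsMaxSol.eq_Ici_of_forall_extend {E : Type*} [NormedAddCommGroup E]
    [InnerProductSpace ℝ E] {F : E → ℝ → Set E} {x x' : ℝ → E} {τ : ℝ} {I : Set ℝ}
    (hmax : IsMaxSol F x x' τ I)
    (hext : ∀ T, τ < T → I = Ico τ T →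
      ∃ T' > T, ∃ w w' : ℝ → E, IsSolOn F w w' (Ico τ T') ∧ EqOn w x (Ico τ T)) :
    I = Ici τ := by
  obtain ⟨hI | ⟨T, hT, rfl⟩, -, hmaximal⟩ := hmax
  · exact hI
  obtain ⟨T', hTT', w, w', hw, hwx⟩ := hext T hT rfl
  have hT' := hmaximal w w' _ (.inr ⟨T', hT.trans hTT', rfl⟩) hw (Ico_subset_Ico_right hTT'.le) hwx
  exact absurd (hT' ▸ ⟨hT.le, hTT'⟩ : T ∈ Ico τ T).2 (lt_irrefl T)

theorem stmt0_general {E : Type*} [NormedAddCommGroup E] [InnerProductSpace ℝ E]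
    (F : E → ℝ → Set E) (D : Set E) (t₀ : ℝ)
    (hadm : AdmitsLocalSols F D (Ici t₀))
    (x x' : ℝ → E) (I : Set ℝ)
    (hmax : IsMaxSol F x x' t₀ I)
    (hcl : closure (x '' I) ⊆ D)
    (hbdd : ∀ J ⊆ I, Bornology.IsBounded J → J.OrdConnected →
      Bornology.IsBounded (⋃ t ∈ J, F (x t) t)) :
    I = Ici t₀ := by
  refine hmax.eq_Ici_of_forall_extend fun T hT hI => ?_
  subst hI
  have hsol := hmax.2.1
  obtain ⟨M, hM⟩ := (hbdd _ subset_rfl (isBounded_Ico t₀ T) ordConnected_Ico).exists_norm_le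
  have hint := hsol.intervalIntegrable_of_norm_le hT.le fun t ht v hv => hM v (mem_biUnion ht hv)
  have hyD : x t₀ + ∫ τ in t₀..T, x' τ ∈ D :=
    hcl <| mem_closure_of_tendsto (hsol.tendsto_nhdsLT hT hint) <| mem_of_superset
      (Ioo_mem_nhdsLT hT) fun t ht => mem_image_of_mem x (Ioo_subset_Ico_self ht)
  obtain ⟨T', hTT', z, z', hz, hzT⟩ := hadm _ hyD T hT.le
  exact ⟨T', hTT', _, _, hsol.piecewise_Iio hT hint hz hTT' hzT,
    (piecewise_eqOn _ _ _).mono fun t ht => ht.2⟩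

/-- Lemma 1: precompact maximal solutions are complete.
If `D` is open and connected, `F` admits local solutions over `D × [t₀,∞)`,
`x` is a maximal solution whose range-closure is contained in `D`, and the union
`⋃_{t∈J} F(x(t),t)` is bounded for every bounded subinterval `J ⊆ I`,
then `x` is complete, i.e. `I = [t₀,∞)`. -/
theorem stmt0 {E : Type*} [NormedAddCommGroup E] [InnerProductSpace ℝ E]
    (F : E → ℝ → Set E) (D : Set E) (t₀ : ℝ)
    (hDopen : IsOpen D) (hDconn : IsConnected D)
    (hadm : AdmitsLocalSols F D (Ici t₀))
    (x x' : ℝ → E) (I : Set ℝ)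
    (hmax : IsMaxSol F x x' t₀ I)
    (hcl : closure (x '' I) ⊆ D)
    (hbdd : ∀ J ⊆ I, Bornology.IsBounded J → J.OrdConnected →
      Bornology.IsBounded (⋃ t ∈ J, F (x t) t)) :
    I = Ici t₀ :=
  stmt0_general F D t₀ hadm x x' I hmax hcl hbdd
end
end

section
/- Let U : Ω → ℝ be locally Lipschitz and regular (in Clarke's sense), where Ω = D × I, and let x : I → ℝⁿ be locally absolutely continuous. If at a point t the derivatives ẋ(t) and (d/dt)U(x(t),t) both exist, then pᵀ[ẋ(t);1] = (d/dt)U(x(t),t) for every p in the Clarke generalized gradient ∂U(x(t),t). -/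
/-! If `U` is Lipschitz near `x(t)` and both `x` and `U ∘ x` are differentiable at `t`, the
two-sided derivative of `U` along the straight line through `x(t)` with velocity `ẋ(t)` exists
and equals `(U ∘ x)'(t)`, because the line and the curve differ by `o(h)` and `U` turns that
into an `o(h)` error. At a Clarke-regular point the one-sided directional derivatives in the
directions `±v` are then `U°(z; ±v) = ±d`, and the defining inequalities `pᵀ(±v) ≤ U°(z; ±v)`
of `∂U(z)` force `pᵀv = d`. -/

open Filter MeasureTheory Set Topology Metric

noncomputable section

open Asymptotics

theorem LipschitzOnWith.hasLineDerivAt_of_hasDerivAt_comp {𝕜 G F : Type*}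
    [NontriviallyNormedField 𝕜] [NormedAddCommGroup G] [NormedSpace 𝕜 G]
    [NormedAddCommGroup F] [NormedSpace 𝕜 F] {U : G → F} {K : NNReal} {s : Set G}
    {c : 𝕜 → G} {w : G} {t : 𝕜} {d : F} (hU : LipschitzOnWith K U s) (hs : s ∈ 𝓝 (c t))
    (hc : HasDerivAt c w t) (hd : HasDerivAt (U ∘ c) d t) :
    HasLineDerivAt 𝕜 U d (c t) w := by
  have hcurve : (fun h : 𝕜 => c (t + h) - c t - h • w) =o[𝓝 0] fun h => h :=
    hasDerivAt_iff_isLittleO_nhds_zero.mp hc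
  have hcomp : (fun h : 𝕜 => U (c (t + h)) - U (c t) - h • d) =o[𝓝 0] fun h => h :=
    hasDerivAt_iff_isLittleO_nhds_zero.mp hd
  have hcurve_mem : ∀ᶠ h in 𝓝 (0 : 𝕜), c (t + h) ∈ s := by
    refine (hc.continuousAt.tendsto.comp ?_) hs
    simpa using (continuous_const_add t).tendsto (0 : 𝕜)
  have hline_mem : ∀ᶠ h in 𝓝 (0 : 𝕜), c t + h • w ∈ s := by
    refine (Continuous.tendsto' ?_ 0 (c t) (by simp)) hs
    fun_prop
  have hgap : (fun h : 𝕜 => U (c t + h • w) - U (c (t + h))) =O[𝓝 0]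
      fun h => c (t + h) - c t - h • w := by
    refine IsBigO.of_bound K ?_
    filter_upwards [hcurve_mem, hline_mem] with h hcurve_h hline_h
    calc ‖U (c t + h • w) - U (c (t + h))‖ ≤ K * ‖c t + h • w - c (t + h)‖ :=
          hU.norm_sub_le hline_h hcurve_h
      _ = K * ‖c (t + h) - c t - h • w‖ := by rw [← norm_neg]; congr 2; abel
  refine hasLineDerivAt_iff_isLittleO_nhds_zero.mpr ((hgap.trans_isLittleO hcurve).add hcomp
    |>.congr_left fun h => ?_)
  abel

theorem pin_neg_right {E : Type*} [NormedAddCommGroup E] [InnerProductSpace ℝ E]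
    (p q : E × ℝ) : pin p (-q) = -pin p q := by
  simp only [pin, Prod.fst_neg, Prod.snd_neg, inner_neg_right, mul_neg, neg_add]

theorem RegularAt.cDD_eq_of_hasLineDerivAt {G : Type*} [NormedAddCommGroup G]
    [NormedSpace ℝ G] {U : G → ℝ} {z v : G} {d : ℝ} (hreg : RegularAt U z)
    (hd : HasLineDerivAt ℝ U d z v) : cDD U z v = d := by
  refine tendsto_nhds_unique (hreg v) (hd.tendsto_slope_zero_right.congr fun h => ?_)
  rw [smul_eq_mul, inv_mul_eq_div]

theorem RegularAt.pin_eq_of_mem_cGradP {E : Type*} [NormedAddCommGroup E]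
    [InnerProductSpace ℝ E] {U : E × ℝ → ℝ} {z v p : E × ℝ} {d : ℝ} (hreg : RegularAt U z)
    (hd : HasLineDerivAt ℝ U d z v) (hp : p ∈ cGradP U z) : pin p v = d := by
  have hd_neg : HasLineDerivAt ℝ U (-d) z (-v) := by
    simpa only [neg_one_smul] using hd.smul (-1 : ℝ)
  have hle : pin p v ≤ d := hreg.cDD_eq_of_hasLineDerivAt hd ▸ hp v
  have hge : pin p (-v) ≤ -d := hreg.cDD_eq_of_hasLineDerivAt hd_neg ▸ hp (-v)
  rw [pin_neg_right] at hge
  linarith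

/-- for a locally Lipschitz function `U` which is Clarke-regular on
`Ω`, at any point where both `ẋ(t)` and `(d/dt)U(x(t),t)` exist, one has
`pᵀ[ẋ(t);1] = (d/dt)U(x(t),t)` for every `p` in the Clarke gradient `∂U(x(t),t)`. -/
theorem stmt2 {E : Type*} [NormedAddCommGroup E] [InnerProductSpace ℝ E]
    (U : E × ℝ → ℝ) (Ω : Set (E × ℝ))
    (hU : LocallyLipschitz U) (hreg : ∀ z ∈ Ω, RegularAt U z)
    (x : ℝ → E) (t : ℝ) (hmem : (x t, t) ∈ Ω)
    (v : E) (hx : HasDerivAt x v t)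
    (d : ℝ) (hd : HasDerivAt (fun s => U (x s, s)) d t) :
    ∀ p ∈ cGradP U (x t, t), pin p (v, 1) = d := by
  intro p hp
  obtain ⟨K, s, hs, hUs⟩ := hU (x t, t)
  have hline : HasLineDerivAt ℝ U d (x t, t) (v, 1) :=
    hUs.hasLineDerivAt_of_hasDerivAt_comp (c := fun s => (x s, s)) hs
      (hx.prodMk (hasDerivAt_id t)) hd
  exact (hreg _ hmem).pin_eq_of_mem_cGradP hline hp
end
end

section
/- Let F : ℝⁿ × [t₀,∞) ⇉ ℝⁿ, let 𝒰 = {U_i}_{i=1}^∞ be a countable collection of locally Lipschitz regular functions on Ω = D × I, and define the reduction G_{U}^{F}(x,t) = { q ∈ F(x,t) : ∃ a ∈ ℝ, ∀ p ∈ ∂U(x,t), pᵀ[q;1] = a } and the 𝒰-reduced inclusion F̃_𝒰(x,t) = ⋂_{i} G_{U_i}^{F}(x,t). If x : I → ℝⁿ is a solution to ẋ ∈ F(x,t) with x(t₀) ∈ D, then ẋ(t) ∈ F̃_𝒰(x(t),t) for almost all t in the interval before x exits D. -/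
open Filter MeasureTheory Set Topology Metric

noncomputable section

/-!
For a regular locally Lipschitz `U` and a curve `γ` differentiable at `t` with velocity `v`, the
right derivative of `U ∘ γ` at `t` is `U°(γ t; v)` and its left derivative is `-U°(γ t; -v)`.
A real function has distinct one-sided derivatives at only countably many points, since each
of them is a strict local extremum of `s ↦ g s - r * s` for some rational `r`. Hence, for almost
every `t`, `U°(z; v) = -U°(z; -v)` at `z = (x t, t)`, `v = (ẋ t, 1)`, and every `p ∈ ∂U(z)`
satisfies both `pᵀv ≤ U°(z; v)` and `-pᵀv ≤ U°(z; -v)`, so `pᵀv = U°(z; v)`.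
-/

def IsStrictLocalMax {X β : Type*} [TopologicalSpace X] [Preorder β] (f : X → β) (x : X) : Prop :=
  ∀ᶠ y in 𝓝[≠] x, f y < f x

theorem countable_setOf_isStrictLocalMax {X β : Type*} [TopologicalSpace X]
    [SecondCountableTopology X] [Preorder β] (f : X → β) :
    {x | IsStrictLocalMax f x}.Countable := by
  obtain ⟨b, hbc, -, hb⟩ := TopologicalSpace.exists_countable_basis X
  have hB : ∀ x ∈ {x | IsStrictLocalMax f x}, ∃ B ∈ b, x ∈ B ∧ ∀ y ∈ B, y ≠ x → f y < f x :=
    fun x hx => hb.mem_nhds_iff.1 (eventually_nhdsWithin_iff.1 hx)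
  choose! B hBb hxB hBmax using hB
  refine MapsTo.countable_of_injOn hBb (fun x hx x' hx' hxx' => ?_) hbc
  by_contra hne
  have h₁ := hBmax x hx x' (hxx' ▸ hxB x' hx') (Ne.symm hne)
  have h₂ := hBmax x' hx' x (hxx' ▸ hxB x hx) hne
  exact lt_asymm h₁ h₂

theorem isStrictLocalMax_sub_mul_of_hasDerivWithinAt {g : ℝ → ℝ} {t a b r : ℝ}
    (ha : HasDerivWithinAt g a (Ioi t) t) (hb : HasDerivWithinAt g b (Iio t) t)
    (har : a < r) (hrb : r < b) : IsStrictLocalMax (fun s => g s - r * s) t := by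
  rw [hasDerivWithinAt_iff_tendsto_slope' self_notMem_Ioi] at ha
  rw [hasDerivWithinAt_iff_tendsto_slope' self_notMem_Iio] at hb
  rw [IsStrictLocalMax, ← nhdsLT_sup_nhdsGT, eventually_sup]
  constructor
  · filter_upwards [hb.eventually (lt_mem_nhds hrb), self_mem_nhdsWithin] with y hy hyt
    rw [slope_def_field, lt_div_iff_of_neg (sub_neg.2 hyt)] at hy
    linarith
  · filter_upwards [ha.eventually (gt_mem_nhds har), self_mem_nhdsWithin] with y hy hyt
    rw [slope_def_field, div_lt_iff₀ (sub_pos.2 hyt)] at hy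
    linarith

theorem countable_setOf_hasDerivWithinAt_Ioi_Iio_ne (g : ℝ → ℝ) :
    {t | ∃ a b, HasDerivWithinAt g a (Ioi t) t ∧ HasDerivWithinAt g b (Iio t) t ∧
      a ≠ b}.Countable := by
  refine ((countable_iUnion fun r : ℚ => countable_setOf_isStrictLocalMax
    fun s => g s - r * s).union (countable_iUnion fun r : ℚ => countable_setOf_isStrictLocalMax
    fun s => -g s - (-r) * s)).mono ?_
  rintro t ⟨a, b, ha, hb, hab⟩
  rcases hab.lt_or_gt with hlt | hgt
  · obtain ⟨r, har, hrb⟩ := exists_rat_btwn hlt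
    exact Or.inl (mem_iUnion.2 ⟨r, isStrictLocalMax_sub_mul_of_hasDerivWithinAt ha hb har hrb⟩)
  · obtain ⟨r, hbr, hra⟩ := exists_rat_btwn hgt
    exact Or.inr (mem_iUnion.2 ⟨r, isStrictLocalMax_sub_mul_of_hasDerivWithinAt ha.neg hb.neg
      (neg_lt_neg hra) (neg_lt_neg hbr)⟩)

theorem ae_hasDerivWithinAt_Ioi_Iio_eq (μ : Measure ℝ) [NullSingletonClass μ] (g : ℝ → ℝ) :
    ∀ᵐ t ∂μ, ∀ a b, HasDerivWithinAt g a (Ioi t) t → HasDerivWithinAt g b (Iio t) t → a = b := by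
  filter_upwards [(countable_setOf_hasDerivWithinAt_Ioi_Iio_ne g).ae_notMem μ] with t ht a b ha hb
  by_contra hab
  exact ht ⟨a, b, ha, hb, hab⟩

section ClarkeChainRule

variable {G : Type*} [NormedAddCommGroup G] [NormedSpace ℝ G] {U : G → ℝ} {γ : ℝ → G}
  {v : G} {t : ℝ}

theorem RegularAt.hasDerivWithinAt_comp_Ioi (hreg : RegularAt U (γ t)) (hU : LocallyLipschitz U)
    (hγ : HasDerivAt γ v t) : HasDerivWithinAt (U ∘ γ) (cDD U (γ t) v) (Ioi t) t := by
  obtain ⟨K, s, hs, hK⟩ := hU (γ t)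
  have hγs : ∀ᶠ y in 𝓝 t, γ y ∈ s := hγ.continuousAt hs
  have hlin : ∀ᶠ y in 𝓝 t, γ t + (y - t) • v ∈ s := by
    have : ContinuousAt (fun y : ℝ => γ t + (y - t) • v) t := by fun_prop
    exact this (by simpa using hs)
  have hshift : Tendsto (fun y => y - t) (𝓝[>] t) (𝓝[>] 0) := by
    refine tendsto_nhdsWithin_iff.2 ⟨?_, ?_⟩
    · simpa using (continuous_sub_right t).continuousWithinAt.tendsto (s := Ioi t) (x := t)
    · filter_upwards [self_mem_nhdsWithin] with y (hy : t < y) using sub_pos.2 hy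
  have hdir : Tendsto (fun y => (U (γ t + (y - t) • v) - U (γ t)) / (y - t)) (𝓝[>] t)
      (𝓝 (cDD U (γ t) v)) := (hreg v).comp hshift
  have herr : Tendsto (fun y => (U (γ y) - U (γ t + (y - t) • v)) / (y - t)) (𝓝[>] t) (𝓝 0) := by
    have hlo := (hasDerivAt_iff_tendsto.1 hγ).const_mul (K : ℝ)
    rw [mul_zero] at hlo
    refine squeeze_zero_norm' ?_ (hlo.mono_left nhdsWithin_le_nhds)
    filter_upwards [nhdsWithin_le_nhds hγs, nhdsWithin_le_nhds hlin, self_mem_nhdsWithin]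
      with y hy hy' hyt
    have hpos : 0 < y - t := sub_pos.2 hyt
    calc ‖(U (γ y) - U (γ t + (y - t) • v)) / (y - t)‖
        ≤ K * dist (γ y) (γ t + (y - t) • v) / (y - t) := by
          rw [norm_div, Real.norm_of_nonneg hpos.le, ← dist_eq_norm]
          exact div_le_div_of_nonneg_right (hK.dist_le_mul _ hy _ hy') hpos.le
      _ = K * (‖y - t‖⁻¹ * ‖γ y - γ t - (y - t) • v‖) := by
          rw [dist_eq_norm, sub_add_eq_sub_sub, Real.norm_of_nonneg hpos.le]
          field_simp
  rw [hasDerivWithinAt_iff_tendsto_slope' self_notMem_Ioi]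
  refine ((hdir.add herr).congr fun y => ?_).trans (by rw [add_zero])
  rw [slope_def_field, Function.comp_apply, Function.comp_apply]
  ring

theorem RegularAt.hasDerivWithinAt_comp_Iio (hreg : RegularAt U (γ t)) (hU : LocallyLipschitz U)
    (hγ : HasDerivAt γ v t) : HasDerivWithinAt (U ∘ γ) (-cDD U (γ t) (-v)) (Iio t) t := by
  have hγneg : HasDerivAt (γ ∘ Neg.neg) (-v) (-t) := by
    simpa using HasDerivAt.scomp (-t) (by rwa [neg_neg]) (hasDerivAt_neg (-t))
  have hright := RegularAt.hasDerivWithinAt_comp_Ioi (by simpa using hreg) hU hγneg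
  simpa [Function.comp_def] using
    hright.comp t (hasDerivWithinAt_neg t (Iio t)) fun y (hy : y < t) => neg_lt_neg hy

end ClarkeChainRule

theorem pin_eq_cDD_of_mem_cGradP {E : Type*} [NormedAddCommGroup E] [InnerProductSpace ℝ E]
    {U : E × ℝ → ℝ} {z v p : E × ℝ} (hp : p ∈ cGradP U z) (hv : cDD U z (-v) = -cDD U z v) :
    pin p v = cDD U z v := by
  have hneg : pin p (-v) = -pin p v := by
    simp only [pin, Prod.fst_neg, Prod.snd_neg, inner_neg_right]
    ring
  linarith [hp v, hp (-v)]

theorem stmt3_general {E : Type*} [NormedAddCommGroup E] [InnerProductSpace ℝ E]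
    (F : E → ℝ → Set E) (D : Set E)
    (𝒰 : ℕ → E × ℝ → ℝ)
    (h𝒰 : ∀ i, LocallyLipschitz (𝒰 i) ∧ ∀ z, RegularAt (𝒰 i) z)
    (x x' : ℝ → E) (I : Set ℝ)
    (hsol : IsSolOn F x x' I) :
    ∀ᵐ t, (t ∈ I ∧ ∀ s ∈ I, s ≤ t → x s ∈ D) → x' t ∈ FRed 𝒰 F (x t) t := by
  set γ : ℝ → E × ℝ := fun s => (x s, s)
  filter_upwards [hsol.2.1, ae_all_iff.2 fun i => ae_hasDerivWithinAt_Ioi_Iio_eq volume (𝒰 i ∘ γ)]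
    with t hsolt hsides
  rintro ⟨htI, -⟩
  obtain ⟨hderiv, hF⟩ := hsolt htI
  have hγ : HasDerivAt γ (x' t, 1) t := hderiv.prodMk (hasDerivAt_id t)
  refine mem_iInter.2 fun i => ⟨hF, _, fun p hp => pin_eq_cDD_of_mem_cGradP hp ?_⟩
  obtain ⟨hlip, hreg⟩ := h𝒰 i
  have hsym := hsides i _ _ ((hreg (γ t)).hasDerivWithinAt_comp_Ioi hlip hγ)
    ((hreg (γ t)).hasDerivWithinAt_comp_Iio hlip hγ)
  linarith

/-- Theorem 1: reduction. If `x` is a solution of `ẋ ∈ F(x,t)` with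
`x(t₀) ∈ D` and `𝒰` is a countable family of locally Lipschitz Clarke-regular
functions, then `ẋ(t) ∈ F̃_𝒰(x(t),t)` for almost every `t` before `x` exits `D`. -/
theorem stmt3 {E : Type*} [NormedAddCommGroup E] [InnerProductSpace ℝ E]
    (F : E → ℝ → Set E) (D : Set E) (hD : IsOpen D) (t₀ : ℝ)
    (𝒰 : ℕ → E × ℝ → ℝ)
    (h𝒰 : ∀ i, LocallyLipschitz (𝒰 i) ∧ ∀ z, RegularAt (𝒰 i) z)
    (x x' : ℝ → E) (I : Set ℝ) (hI : IntervalFrom I t₀)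
    (hsol : IsSolOn F x x' I) (h0 : x t₀ ∈ D) :
    ∀ᵐ t, (t ∈ I ∧ ∀ s ∈ I, s ≤ t → x s ∈ D) → x' t ∈ FRed 𝒰 F (x t) t :=
  stmt3_general F D 𝒰 h𝒰 x x' I hsol
end
end

section
/- (Matrosov Claim 1.) Let γ, δ, Δ > 0 and let {Y_j}_{j=1}^{M} be continuous real-valued functions on the compact set closed-ball(0_m,γ) × D(δ,Δ), where D(δ,Δ) = {y ∈ ℝⁿ : δ ≤ ‖y‖ ≤ Δ}, having the Matrosov property. Then there exists ε > 0 such that for all (z,x) in the domain, Y_j(z,x) = 0 for all j ∈ {1,…,M−1} implies Y_M(z,x) ≤ −ε. -/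
open Filter MeasureTheory Set Topology Metric

noncomputable section

/-- The compact domain `B̄(0_m,γ) × D(δ,Δ)` with `D(δ,Δ)` the closed annulus. -/
def matDom (m n : ℕ) (γ δ Δ : ℝ) : Set (EuclideanSpace ℝ (Fin m) × EuclideanSpace ℝ (Fin n)) :=
  closedBall (0 : EuclideanSpace ℝ (Fin m)) γ ×ˢ
    {y : EuclideanSpace ℝ (Fin n) | δ ≤ ‖y‖ ∧ ‖y‖ ≤ Δ}

/-- The Matrosov property for an extended family `Y` (with the conventions
`Y 0 = 0` and `Y (M+1) = 1` supplied as hypotheses elsewhere). -/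
def MatProp (m n : ℕ) (M : ℕ) (Y : ℕ → EuclideanSpace ℝ (Fin m) × EuclideanSpace ℝ (Fin n) → ℝ)
    (γ δ Δ : ℝ) : Prop :=
  ∀ j ≤ M, ∀ z ∈ matDom m n γ δ Δ, (∀ i ≤ j, Y i z = 0) → Y (j+1) z ≤ 0

/-!
On the zero set `K` of `Y₁, …, Y_{M-1}` in the domain, the Matrosov property applied with
`j = M - 1` gives `Y_M ≤ 0`, and applied with `j = M` it rules out `Y_M = 0` because
`Y_{M+1} = 1`. So `Y_M < 0` on `K`, which is compact as a closed subset of the compact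
domain, and a continuous function that is negative on a compact set is bounded away from `0`.
-/

theorem IsCompact.sep_forall_eq {X Y ι : Type*} [TopologicalSpace X] [T2Space X]
    [TopologicalSpace Y] [T1Space Y] {D : Set X} (hD : IsCompact D) {s : Set ι}
    {f : ι → X → Y} (hf : ∀ j ∈ s, ContinuousOn (f j) D) (c : ι → Y) :
    IsCompact {z ∈ D | ∀ j ∈ s, f j z = c j} := by
  have hset : {z ∈ D | ∀ j ∈ s, f j z = c j} = D ∩ ⋂ j ∈ s, D ∩ f j ⁻¹' {c j} := by
    ext z
    simp only [mem_ofPred_eq, mem_inter_iff, mem_iInter, mem_preimage, mem_singleton_iff]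
    exact ⟨fun ⟨hz, h⟩ => ⟨hz, fun j hj => ⟨hz, h j hj⟩⟩, fun ⟨hz, h⟩ => ⟨hz, fun j hj => (h j hj).2⟩⟩
  rw [hset]
  refine hD.inter_right (isClosed_biInter fun j hj => ?_)
  exact (hf j hj).preimage_isClosed_of_isClosed hD.isClosed isClosed_singleton

theorem isCompact_matDom (m n : ℕ) (γ δ Δ : ℝ) : IsCompact (matDom m n γ δ Δ) := by
  refine (isCompact_closedBall _ _).prod ((isCompact_closedBall 0 Δ).of_isClosed_subset ?_ ?_)
  · exact (isClosed_le continuous_const continuous_norm).inter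
      (isClosed_le continuous_norm continuous_const)
  · exact fun y hy => mem_closedBall_zero_iff.2 hy.2

theorem MatProp.neg_of_forall_eq_zero {m n M : ℕ} {γ δ Δ : ℝ}
    {Y : ℕ → EuclideanSpace ℝ (Fin m) × EuclideanSpace ℝ (Fin n) → ℝ}
    (hmat : MatProp m n M Y γ δ Δ) (hM : 1 ≤ M) {z} (hz : z ∈ matDom m n γ δ Δ)
    (hY0 : Y 0 z = 0) (hYtop : Y (M + 1) z = 1) (hzero : ∀ j ∈ Icc 1 (M - 1), Y j z = 0) :
    Y M z < 0 := by
  have hbelow : ∀ i ≤ M - 1, Y i z = 0 := fun i hi =>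
    i.eq_zero_or_pos.elim (fun h => h ▸ hY0) (fun h => hzero i ⟨h, hi⟩)
  have hle : Y M z ≤ 0 := by
    simpa only [Nat.sub_add_cancel hM] using hmat (M - 1) (M.sub_le 1) z hz hbelow
  refine hle.lt_of_ne fun hYM => ?_
  have hupto : ∀ i ≤ M, Y i z = 0 := fun i hi =>
    hi.lt_or_eq.elim (fun h => hbelow i (Nat.le_sub_one_of_lt h)) (fun h => h ▸ hYM)
  have hnext : Y (M + 1) z ≤ 0 := hmat M le_rfl z hz hupto
  linarith

theorem stmt13_general (m n : ℕ) (γ δ Δ : ℝ)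
    (M : ℕ) (hM : 1 ≤ M)
    (Y : ℕ → EuclideanSpace ℝ (Fin m) × EuclideanSpace ℝ (Fin n) → ℝ)
    (hY0 : ∀ z, Y 0 z = 0) (hYtop : ∀ z, Y (M+1) z = 1)
    (hYc : ∀ j, 1 ≤ j → j ≤ M → ContinuousOn (Y j) (matDom m n γ δ Δ))
    (hmat : MatProp m n M Y γ δ Δ) :
    ∃ ε > 0, ∀ z ∈ matDom m n γ δ Δ,
      (∀ j, 1 ≤ j → j ≤ M - 1 → Y j z = 0) → Y M z ≤ -ε := by
  set K := {z ∈ matDom m n γ δ Δ | ∀ j ∈ Icc 1 (M - 1), Y j z = 0}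
  have hK : IsCompact K := (isCompact_matDom m n γ δ Δ).sep_forall_eq
    (fun j hj => hYc j hj.1 (hj.2.trans (M.sub_le 1))) fun _ => 0
  have hneg : ∀ z ∈ K, 0 < -Y M z := fun z hz =>
    neg_pos.2 (hmat.neg_of_forall_eq_zero hM hz.1 (hY0 z) (hYtop z) hz.2)
  obtain ⟨ε, hε, hbound⟩ := hK.exists_forall_le' ((hYc M hM le_rfl).neg.mono (sep_subset _ _)) hneg
  exact ⟨ε, hε, fun z hz hzero => le_neg.2 (hbound z ⟨hz, fun j hj => hzero j hj.1 hj.2⟩)⟩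

/-- Matrosov Claim 1: if continuous functions Y₁,…,Y_M have the
Matrosov property on the compact set B̄(0,γ) × D(δ,Δ), then there is ε > 0 such that
Y₁ = ⋯ = Y_{M−1} = 0 forces Y_M ≤ −ε. -/
theorem stmt13 (m n : ℕ) (γ δ Δ : ℝ) (hγ : 0 < γ) (hδ : 0 < δ) (hΔ : 0 < Δ)
    (M : ℕ) (hM : 1 ≤ M)
    (Y : ℕ → EuclideanSpace ℝ (Fin m) × EuclideanSpace ℝ (Fin n) → ℝ)
    (hY0 : ∀ z, Y 0 z = 0) (hYtop : ∀ z, Y (M+1) z = 1)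
    (hYc : ∀ j, 1 ≤ j → j ≤ M → ContinuousOn (Y j) (matDom m n γ δ Δ))
    (hmat : MatProp m n M Y γ δ Δ) :
    ∃ ε > 0, ∀ z ∈ matDom m n γ δ Δ,
      (∀ j, 1 ≤ j → j ≤ M - 1 → Y j z = 0) → Y M z ≤ -ε :=
  stmt13_general m n γ δ Δ M hM Y hY0 hYtop hYc hmat
end
end

section
/- (Matrosov Claim 2.) Let l ∈ {2,…,M}, ε̃ > 0, and Ỹ_l continuous on closed-ball(0_m,γ) × D(δ,Δ). Suppose whenever (z,x) lies in this compact set and Y_j(z,x) = 0 for all j ∈ {1,…,l−1}, it holds that Ỹ_l(z,x) ≤ −ε̃. Then there exists K_{l−1} > 0 such that whenever (z,x) lies in the set and Y_j(z,x) = 0 for all j ∈ {1,…,l−2}, it holds that K_{l−1} Y_{l−1}(z,x) + Ỹ_l(z,x) ≤ −ε̃/2. -/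
open Filter MeasureTheory Set Topology Metric

noncomputable section

/-! On the compact set `S` where `Y₁, …, Y_{l-2}` vanish, the Matrosov property gives
`Y_{l-1} ≤ 0`. The sets `{K Y_{l-1} + Ỹ_l < -ε̃/2}` are relatively open in `S`, increase with `K`
because `Y_{l-1} ≤ 0`, and cover `S`: where `Y_{l-1} < 0` a large `K` works, and where
`Y_{l-1} = 0` already `Ỹ_l ≤ -ε̃ < -ε̃/2`. By compactness a single `K` suffices. -/

theorem exists_pos_mul_add_lt_of_compactSpace {X : Type*} [TopologicalSpace X] [CompactSpace X]
    {f g : X → ℝ} {a : ℝ} (hf : Continuous f) (hg : Continuous g) (hf0 : ∀ x, f x ≤ 0)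
    (hfg : ∀ x, f x = 0 → g x < a) : ∃ K > (0 : ℝ), ∀ x, K * f x + g x < a := by
  let U : ℕ → Set X := fun n => {x | ((n : ℝ) + 1) * f x + g x < a}
  have hU_open : ∀ n, IsOpen (U n) := fun n => isOpen_lt (by fun_prop) continuous_const
  have hU_mono : Monotone U := fun m n hmn x (hx : _ < a) => by
    have : ((n : ℝ) + 1) * f x ≤ ((m : ℝ) + 1) * f x :=
      mul_le_mul_of_nonpos_right (by gcongr) (hf0 x)
    exact (add_le_add_left this _).trans_lt hx
  have hU_cover : univ ⊆ ⋃ n, U n := by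
    intro x _
    rw [mem_iUnion]
    rcases (hf0 x).lt_or_eq with hneg | hzero
    · obtain ⟨n, hn⟩ := exists_nat_gt ((g x - a) / -f x)
      have := (div_lt_iff₀ (neg_pos.2 hneg)).1 hn
      exact ⟨n, show _ < a by nlinarith⟩
    · exact ⟨0, show _ < a by simp [hzero, hfg x hzero]⟩
  obtain ⟨n, hn⟩ :=
    isCompact_univ.elim_directed_cover U hU_open hU_cover hU_mono.directed_le
  exact ⟨n + 1, by positivity, fun x => hn (mem_univ x)⟩

theorem IsCompact.exists_pos_mul_add_lt {X : Type*} [TopologicalSpace X] {S : Set X}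
    (hS : IsCompact S) {f g : X → ℝ} {a : ℝ} (hf : ContinuousOn f S) (hg : ContinuousOn g S)
    (hf0 : ∀ x ∈ S, f x ≤ 0) (hfg : ∀ x ∈ S, f x = 0 → g x < a) :
    ∃ K > (0 : ℝ), ∀ x ∈ S, K * f x + g x < a := by
  have := isCompact_iff_compactSpace.1 hS
  obtain ⟨K, hK, h⟩ := exists_pos_mul_add_lt_of_compactSpace hf.domRestrict hg.domRestrict
    (fun x => hf0 x x.2) (fun x => hfg x x.2)
  exact ⟨K, hK, fun x hx => h ⟨x, hx⟩⟩

theorem IsCompact.sep_forall_eq_zero {X ι : Type*} [TopologicalSpace X] [T2Space X]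
    {D : Set X} (hD : IsCompact D) {s : Set ι} {Y : ι → X → ℝ}
    (hY : ∀ j ∈ s, ContinuousOn (Y j) D) : IsCompact {z ∈ D | ∀ j ∈ s, Y j z = 0} := by
  have hF : ContinuousOn (fun z (j : s) => Y j z) D :=
    continuousOn_pi.2 fun j => hY j j.2
  have hclosed := hF.preimage_isClosed_of_isClosed hD.isClosed (isClosed_singleton (x := 0))
  refine hD.of_isClosed_subset ?_ (sep_subset _ _)
  convert hclosed using 1
  ext z
  simp [funext_iff]

theorem isCompact_setOf_norm_mem_Icc {E : Type*} [NormedAddCommGroup E] [ProperSpace E]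
    (δ Δ : ℝ) : IsCompact {y : E | δ ≤ ‖y‖ ∧ ‖y‖ ≤ Δ} :=
  (isCompact_closedBall (0 : E) Δ).of_isClosed_subset
    ((isClosed_le continuous_const continuous_norm).inter
      (isClosed_le continuous_norm continuous_const))
    fun _ hy => mem_closedBall_zero_iff.2 hy.2

theorem MatProp.apply_succ_nonpos {m n M : ℕ}
    {Y : ℕ → EuclideanSpace ℝ (Fin m) × EuclideanSpace ℝ (Fin n) → ℝ} {γ δ Δ : ℝ}
    (hmat : MatProp m n M Y γ δ Δ) (hY0 : ∀ z, Y 0 z = 0) {j : ℕ} (hj : j ≤ M)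
    {z : EuclideanSpace ℝ (Fin m) × EuclideanSpace ℝ (Fin n)} (hz : z ∈ matDom m n γ δ Δ)
    (hzero : ∀ i ∈ Icc 1 j, Y i z = 0) : Y (j + 1) z ≤ 0 :=
  hmat j hj z hz fun i hi => by
    rcases Nat.eq_zero_or_pos i with rfl | hpos
    · exact hY0 z
    · exact hzero i ⟨hpos, hi⟩

theorem stmt14_general (m n : ℕ) (γ δ Δ : ℝ)
    (M : ℕ)
    (Y : ℕ → EuclideanSpace ℝ (Fin m) × EuclideanSpace ℝ (Fin n) → ℝ)
    (hY0 : ∀ z, Y 0 z = 0)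
    (hYc : ∀ j, 1 ≤ j → j ≤ M → ContinuousOn (Y j) (matDom m n γ δ Δ))
    (hmat : MatProp m n M Y γ δ Δ)
    (l : ℕ) (hl2 : 2 ≤ l) (hlM : l ≤ M) (ε : ℝ) (hε : 0 < ε)
    (Yt : EuclideanSpace ℝ (Fin m) × EuclideanSpace ℝ (Fin n) → ℝ)
    (hYtc : ContinuousOn Yt (matDom m n γ δ Δ))
    (hYt : ∀ z ∈ matDom m n γ δ Δ,
      (∀ j, 1 ≤ j → j ≤ l - 1 → Y j z = 0) → Yt z ≤ -ε) :
    ∃ K > (0:ℝ), ∀ z ∈ matDom m n γ δ Δ,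
      (∀ j, 1 ≤ j → j ≤ l - 2 → Y j z = 0) →
      K * Y (l-1) z + Yt z ≤ -ε / 2 := by
  set S := {z ∈ matDom m n γ δ Δ | ∀ j ∈ Icc 1 (l - 2), Y j z = 0}
  have hS : IsCompact S :=
    (isCompact_matDom m n γ δ Δ).sep_forall_eq_zero fun j hj => hYc j hj.1 (by grind)
  have hl : l - 2 + 1 = l - 1 := by omega
  have hf0 : ∀ z ∈ S, Y (l - 1) z ≤ 0 := fun z hz => by
    simpa only [hl] using hmat.apply_succ_nonpos hY0 (by omega) hz.1 hz.2
  have hfg : ∀ z ∈ S, Y (l - 1) z = 0 → Yt z < -ε / 2 := fun z hz hzero => by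
    have := hYt z hz.1 fun j hj1 hjl => by
      rcases (show j ≤ l - 2 ∨ j = l - 1 by omega) with hj | rfl
      exacts [hz.2 j ⟨hj1, hj⟩, hzero]
    linarith
  obtain ⟨K, hK, hKS⟩ := hS.exists_pos_mul_add_lt
    ((hYc (l - 1) (by omega) (by omega)).mono (sep_subset _ _)) (hYtc.mono (sep_subset _ _))
    hf0 hfg
  exact ⟨K, hK, fun z hz hzero => (hKS z ⟨hz, fun j hj => hzero j hj.1 hj.2⟩).le⟩

/-- Matrosov Claim 2. -/
theorem stmt14 (m n : ℕ) (γ δ Δ : ℝ) (hγ : 0 < γ) (hδ : 0 < δ) (hΔ : 0 < Δ)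
    (M : ℕ) (hM : 1 ≤ M)
    (Y : ℕ → EuclideanSpace ℝ (Fin m) × EuclideanSpace ℝ (Fin n) → ℝ)
    (hY0 : ∀ z, Y 0 z = 0) (hYtop : ∀ z, Y (M+1) z = 1)
    (hYc : ∀ j, 1 ≤ j → j ≤ M → ContinuousOn (Y j) (matDom m n γ δ Δ))
    (hmat : MatProp m n M Y γ δ Δ)
    (l : ℕ) (hl2 : 2 ≤ l) (hlM : l ≤ M) (ε : ℝ) (hε : 0 < ε)
    (Yt : EuclideanSpace ℝ (Fin m) × EuclideanSpace ℝ (Fin n) → ℝ)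
    (hYtc : ContinuousOn Yt (matDom m n γ δ Δ))
    (hYt : ∀ z ∈ matDom m n γ δ Δ,
      (∀ j, 1 ≤ j → j ≤ l - 1 → Y j z = 0) → Yt z ≤ -ε) :
    ∃ K > (0:ℝ), ∀ z ∈ matDom m n γ δ Δ,
      (∀ j, 1 ≤ j → j ≤ l - 2 → Y j z = 0) →
      K * Y (l-1) z + Yt z ≤ -ε / 2 :=
  stmt14_general m n γ δ Δ M Y hY0 hYc hmat l hl2 hlM ε hε Yt hYtc hYt
end
end

section
/- (Example reduction.) Let H(y) = {0} if |y| ≠ 1 and H(y) = [−1,1] if |y| = 1, and define F : ℝ² ⇉ ℝ² by F(x) = ({−x₁+x₂} + H(x₂)) × ({−x₁−x₂} + H(x₁)). With U as the piecewise-linear convex function of the previous item, the reduction G_U^F(x) = {q ∈ F(x) : pᵀq constant over p ∈ ∂U(x)} equals F(x) when |x₁| ≠ 1 and |x₂| ≠ 1, and is empty otherwise. Consequently, every locally absolutely continuous solution x(·) of ẋ ∈ F(x) satisfies ẋᵀ x = −‖x‖² a.e., and the inclusion is globally asymptotically stable at x = 0. -/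
open Filter MeasureTheory Set Topology Metric

noncomputable section

/-- `H(y) = {0}` if `|y| ≠ 1`, `[−1,1]` if `|y| = 1`. -/
noncomputable def exH (y : ℝ) : Set ℝ := if |y| = 1 then Icc (-1 : ℝ) 1 else {0}

/-- The set-valued map of Example 2. -/
noncomputable def exF : EuclideanSpace ℝ (Fin 2) → Set (EuclideanSpace ℝ (Fin 2)) :=
  fun x => {q | (∃ h ∈ exH (x 1), q 0 = -x 0 + x 1 + h) ∧
                (∃ h ∈ exH (x 0), q 1 = -x 0 - x 1 + h)}

/-- The piecewise-linear convex function of Example 2. -/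
noncomputable def exU : EuclideanSpace ℝ (Fin 2) → ℝ := fun x =>
  max (x 0 - 1) 0 - min (x 0 + 1) 0 + (max (x 1 - 1) 0 - min (x 1 + 1) 0)

/-!
Off the lines `|xᵢ| = 1` the function `exU` is affine near `x`, so its Clarke gradient is a
single vector and the reduction keeps all of `exF x`. On a line `|xᵢ| = 1` both `0` and `xᵢ = ±1`
occur as `i`-th components of subgradients, so an element `q` of the reduction must have `qᵢ = 0`,
which the shape of `exF` rules out.

The same mechanism acts on solutions: a coordinate can only sit at `±1` with zero derivative
(a.e.), and this forces `ẋ = exA x = (-x₀ + x₁, -x₀ - x₁)` a.e. By uniqueness for this linear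
ODE every solution is `e^{-t}` times a rotation of `x(0)`, defined for all `t ≥ 0`, with norm
`e^{-t} ‖x(0)‖`.
-/

open scoped RealInnerProductSpace

section Clarke

variable {E : Type*} [NormedAddCommGroup E] [InnerProductSpace ℝ E]

theorem cDD_eq_inner_of_eventuallyEq {U : E → ℝ} {z g : E}
    (hU : ∀ᶠ w in 𝓝 z, U w = U z + ⟪g, w - z⟫) (v : E) : cDD U z v = ⟪g, v⟫ := by
  have hshift : Tendsto (fun p : E × ℝ => p.1 + p.2 • v) ((𝓝 z) ×ˢ (𝓝[>] (0 : ℝ))) (𝓝 z) := by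
    have hc : Continuous fun p : E × ℝ => p.1 + p.2 • v := by fun_prop
    have := hc.tendsto (z, 0)
    rw [zero_smul, add_zero, nhds_prod_eq] at this
    exact this.mono_left (prod_mono le_rfl nhdsWithin_le_nhds)
  have hquot : ∀ᶠ p : E × ℝ in (𝓝 z) ×ˢ (𝓝[>] (0 : ℝ)),
      (U (p.1 + p.2 • v) - U p.1) / p.2 = ⟪g, v⟫ := by
    filter_upwards [hshift.eventually hU, tendsto_fst.eventually hU,
      tendsto_snd.eventually self_mem_nhdsWithin] with p h₁ h₂ (hp : 0 < p.2)
    rw [h₁, h₂, add_sub_add_left_eq_sub, ← inner_sub_right,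
      show p.1 + p.2 • v - z - (p.1 - z) = p.2 • v by abel, inner_smul_right,
      mul_div_cancel_left₀ _ hp.ne']
  rw [cDD, limsup_congr hquot, limsup_const]

theorem cGrad_subset_singleton_of_eventuallyEq {U : E → ℝ} {z g : E}
    (hU : ∀ᶠ w in 𝓝 z, U w = U z + ⟪g, w - z⟫) : cGrad U z ⊆ {g} := by
  intro p hp
  have h : ⟪p - g, p - g⟫ ≤ 0 := by
    have := hp (p - g)
    rw [cDD_eq_inner_of_eventuallyEq hU] at this
    rw [inner_sub_left]
    linarith
  exact sub_eq_zero.mp (real_inner_self_nonpos.mp h)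

theorem mem_cGrad_of_subgradient {U : E → ℝ} {K : NNReal} (hU : LipschitzWith K U) {z p : E}
    (hp : ∀ w, U z + ⟪p, w - z⟫ ≤ U w) : p ∈ cGrad U z := by
  intro v
  set quot := fun q : E × ℝ => (U (q.1 + q.2 • v) - U q.1) / q.2
  have hbdd : ∀ᶠ q in (𝓝 z) ×ˢ (𝓝[>] (0 : ℝ)), quot q ≤ K * ‖v‖ := by
    filter_upwards [tendsto_snd.eventually self_mem_nhdsWithin] with q (hq : 0 < q.2)
    rw [div_le_iff₀ hq]
    calc U (q.1 + q.2 • v) - U q.1 ≤ K * dist (q.1 + q.2 • v) q.1 :=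
          (le_abs_self _).trans (by rw [← Real.dist_eq]; exact hU.dist_le_mul _ _)
      _ = K * ‖v‖ * q.2 := by
          rw [dist_eq_norm, add_sub_cancel_left, norm_smul, Real.norm_of_nonneg hq.le]; ring
  have hlow : ∀ᶠ h in 𝓝[>] (0 : ℝ), ⟪p, v⟫ ≤ quot (z, h) := by
    filter_upwards [self_mem_nhdsWithin] with h (hh : 0 < h)
    have := hp (z + h • v)
    rw [add_sub_cancel_left, inner_smul_right] at this
    simp only [quot, le_div_iff₀ hh]
    linarith
  have hz : Tendsto (fun h : ℝ => (z, h)) (𝓝[>] 0) ((𝓝 z) ×ˢ (𝓝[>] (0 : ℝ))) :=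
    tendsto_const_nhds.prodMk tendsto_id
  exact le_limsup_of_frequently_le (hz.frequently hlow.frequently)
    (isBoundedUnder_of_eventually_le hbdd)

theorem GRedA_eq_self_of_cGrad_subset_singleton {U : E → ℝ} {F : E → Set E} {z g : E}
    (h : cGrad U z ⊆ {g}) : GRedA U F z = F z :=
  subset_antisymm (sep_subset _ _) fun q hq => ⟨hq, ⟪g, q⟫, fun p hp => by rw [h hp]⟩

theorem notMem_GRedA_of_inner_ne {U : E → ℝ} {F : E → Set E} {z p p' q : E}
    (hp : p ∈ cGrad U z) (hp' : p' ∈ cGrad U z) (hq : ⟪p, q⟫ ≠ ⟪p', q⟫) :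
    q ∉ GRedA U F z := by
  rintro ⟨-, a, ha⟩
  exact hq ((ha p hp).trans (ha p' hp').symm)

end Clarke

theorem ae_eq_zero_of_hasDerivAt_of_eq {F : Type*} [NormedAddCommGroup F] [NormedSpace ℝ F]
    (f f' : ℝ → F) (c : F) : ∀ᵐ t, f t = c → HasDerivAt f (f' t) t → f' t = 0 := by
  set S := {t | f t = c ∧ HasDerivAt f (f' t) t ∧ f' t ≠ 0}
  -- `f` leaves the level `c` at nonzero speed, so every point of `S` is isolated in `S`
  have hiso : ∀ t ∈ S, 𝓝[S ∩ Ioi t] t = ⊥ := by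
    intro t ht
    have hne : ∀ᶠ s in 𝓝[≠] t, f s ≠ c := ht.2.1.eventually_ne ht.2.2
    rw [← Filter.eventually_false_iff_eq_bot]
    filter_upwards [nhdsWithin_mono t (fun s hs => ne_of_gt hs.2) hne,
      self_mem_nhdsWithin] with s h₁ h₂ using h₁ h₂.1.1
  have hS : S.Countable := by
    simpa [sep_eq_self_iff_mem_true.2 hiso] using
      countable_setOfPred_isolated_right_within (s := S)
  filter_upwards [hS.ae_notMem volume] with t ht h₁ h₂
  by_contra h₃
  exact ht ⟨h₁, h₂, h₃⟩

namespace IntervalFrom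

variable {I : Set ℝ} {τ₀ : ℝ}

theorem left_mem (hI : IntervalFrom I τ₀) : τ₀ ∈ I := by
  rcases hI with rfl | ⟨T, hT, rfl⟩
  exacts [mem_Ici.2 le_rfl, ⟨le_rfl, hT⟩]

theorem le_of_mem (hI : IntervalFrom I τ₀) {t : ℝ} (ht : t ∈ I) : τ₀ ≤ t := by
  rcases hI with rfl | ⟨T, -, rfl⟩
  exacts [ht, ht.1]

theorem ordConnected (hI : IntervalFrom I τ₀) : I.OrdConnected := by
  rcases hI with rfl | ⟨T, -, rfl⟩ <;> infer_instance

theorem measurableSet (hI : IntervalFrom I τ₀) : MeasurableSet I := by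
  rcases hI with rfl | ⟨T, -, rfl⟩
  exacts [measurableSet_Ici, measurableSet_Ico]

theorem mem_nhdsGE (hI : IntervalFrom I τ₀) {t : ℝ} (ht : t ∈ I) : I ∈ 𝓝[≥] t := by
  rcases hI with rfl | ⟨T, -, rfl⟩
  exacts [mem_of_superset self_mem_nhdsWithin (Ici_subset_Ici.2 ht),
    Ico_mem_nhdsGE_of_mem ⟨ht.1, ht.2⟩]

end IntervalFrom

section Solutions

variable {E : Type*} [NormedAddCommGroup E] [InnerProductSpace ℝ E]
  {F : E → ℝ → Set E} {f : E → E} {x x' : ℝ → E} {I : Set ℝ} {τ₀ : ℝ}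

theorem IsSolOn.sub_eq_integral (hx : IsSolOn F x x' I) (hI : IntervalFrom I τ₀)
    (hx' : ∀ᵐ t, t ∈ I → x' t = f (x t)) {s t : ℝ} (hs : s ∈ I) (ht : t ∈ I) :
    x t - x s = ∫ u in s..t, f (x u) := by
  rw [(hx.2.2 s hs t ht).2]
  refine intervalIntegral.integral_congr_ae ?_
  filter_upwards [hx'] with u hu hmem
  exact hu (hI.ordConnected.uIcc_subset hs ht (uIoc_subset_uIcc hmem))

theorem IsSolOn.hasDerivWithinAt [CompleteSpace E] (hx : IsSolOn F x x' I)
    (hI : IntervalFrom I τ₀) (hf : Continuous f) (hx' : ∀ᵐ t, t ∈ I → x' t = f (x t))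
    {τ : ℝ} (hτ : τ ∈ I) : HasDerivWithinAt x (f (x τ)) (Ici τ) τ := by
  have hg : ContinuousOn (fun t => f (x t)) I := hf.comp_continuousOn hx.1
  have hIτ : I ∈ 𝓝[>] τ := nhdsWithin_mono τ Ioi_subset_Ici_self (hI.mem_nhdsGE hτ)
  have hFTC : HasDerivWithinAt (fun u => ∫ s in τ..u, f (x s)) (f (x τ)) (Ici τ) τ :=
    intervalIntegral.integral_hasDerivWithinAt_right IntervalIntegrable.refl
      ((hg.stronglyMeasurableAtFilter_nhdsWithin hI.measurableSet τ).filter_mono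
        (nhdsWithin_le_of_mem hIτ))
      ((hg τ hτ).mono_of_mem_nhdsWithin hIτ)
  refine (hFTC.const_add (x τ)).congr_of_eventuallyEq ?_ (by simp)
  filter_upwards [hI.mem_nhdsGE hτ] with u hu
  rw [← hx.sub_eq_integral hI hx' hτ hu, add_sub_cancel]

theorem IsSolOn.eqOn_of_ae_eq [CompleteSpace E] {K : NNReal} (hx : IsSolOn F x x' I)
    (hI : IntervalFrom I τ₀) (hf : LipschitzWith K f) (hx' : ∀ᵐ t, t ∈ I → x' t = f (x t))
    {y : ℝ → E} (hy : ∀ t, HasDerivAt y (f (y t)) t) (h₀ : x τ₀ = y τ₀) : EqOn x y I := by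
  intro b hb
  have hsub : Icc τ₀ b ⊆ I := hI.ordConnected.out hI.left_mem hb
  exact ODE_solution_unique (v := fun _ => f) (fun _ => hf) (hx.1.mono hsub)
    (fun t ht => hx.hasDerivWithinAt hI hf.continuous hx' (hsub (Ico_subset_Icc_self ht)))
    (HasDerivAt.continuousOn fun t _ => hy t) (fun t _ => (hy t).hasDerivWithinAt) h₀
    ⟨hI.le_of_mem hb, le_rfl⟩

theorem isSolOn_of_hasDerivAt [CompleteSpace E] {F : E → Set E} {y : ℝ → E} (hf : Continuous f)
    (hy : ∀ t, HasDerivAt y (f (y t)) t) (hF : ∀ w, f w ∈ F w) (I : Set ℝ) :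
    IsSolOn (auton F) y (fun t => f (y t)) I := by
  have hyc : Continuous y := continuous_iff_continuousAt.2 fun t => (hy t).continuousAt
  have hc : Continuous fun t => f (y t) := hf.comp hyc
  refine ⟨hyc.continuousOn, .of_forall fun t _ => ⟨hy t, hF _⟩,
    fun s _ t _ => ⟨hc.intervalIntegrable s t, ?_⟩⟩
  rw [intervalIntegral.integral_eq_sub_of_hasDerivAt (fun u _ => hy u) (hc.intervalIntegrable s t)]

theorem IsMaxSol.eq_Ici {F : E → ℝ → Set E} {τ : ℝ} (hx : IsMaxSol F x x' τ I) {y y' : ℝ → E}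
    (hy : IsSolOn F y y' (Ici τ)) (hxy : ∀ t ∈ I, y t = x t) : I = Ici τ :=
  (hx.2.2 y y' (Ici τ) (Or.inl rfl) hy (fun _ ht => hx.1.le_of_mem ht) hxy).symm

end Solutions

def deadZone (t : ℝ) : ℝ := max (t - 1) 0 - min (t + 1) 0

def deadZoneSlope (t : ℝ) : ℝ := if t < -1 then -1 else if t ≤ 1 then 0 else 1

theorem deadZone_eq (t : ℝ) : deadZone t = max (|t| - 1) 0 := by
  unfold deadZone
  rcases le_total 0 t with h | h
  · rw [abs_of_nonneg h, min_eq_right (by linarith)]; ring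
  · rw [abs_of_nonpos h, max_eq_right (by linarith : t - 1 ≤ 0)]
    rcases le_total (t + 1) 0 with h' | h'
    · rw [min_eq_left h', max_eq_left (by linarith)]; ring
    · rw [min_eq_right h', max_eq_right (by linarith)]; ring

theorem lipschitzWith_deadZone : LipschitzWith 1 deadZone := by
  refine LipschitzWith.of_dist_le_mul fun a b => ?_
  simp only [Real.dist_eq, deadZone_eq, NNReal.coe_one, one_mul]
  calc |max (|a| - 1) 0 - max (|b| - 1) 0| ≤ |(|a| - 1) - (|b| - 1)| :=
        abs_max_sub_max_le_abs _ _ _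
    _ ≤ |a - b| := by rw [sub_sub_sub_cancel_right]; exact abs_abs_sub_abs_le_abs_sub a b

theorem deadZoneSlope_eq_zero {t : ℝ} (ht : |t| = 1) : deadZoneSlope t = 0 := by
  rcases (abs_eq zero_le_one).1 ht with rfl | rfl <;> norm_num [deadZoneSlope]

theorem deadZone_add_slope_mul_le (t u : ℝ) :
    deadZone t + deadZoneSlope t * (u - t) ≤ deadZone u := by
  simp only [deadZone, deadZoneSlope]
  split_ifs <;> grind

theorem deadZone_add_mul_le {t : ℝ} (ht : |t| = 1) (u : ℝ) :
    deadZone t + t * (u - t) ≤ deadZone u := by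
  rcases (abs_eq zero_le_one).1 ht with rfl | rfl <;> simp only [deadZone] <;> grind

theorem deadZone_eventuallyEq {t : ℝ} (ht : |t| ≠ 1) :
    ∀ᶠ u in 𝓝 t, deadZone u = deadZone t + deadZoneSlope t * (u - t) := by
  rcases lt_trichotomy t (-1) with h | rfl | h
  · filter_upwards [eventually_lt_nhds h] with u hu
    simp only [deadZone, deadZoneSlope, if_pos h]
    grind
  · norm_num at ht
  rcases lt_trichotomy t 1 with h' | rfl | h'
  · filter_upwards [Ioo_mem_nhds h h'] with u hu
    simp only [deadZone, deadZoneSlope, if_neg (not_lt.2 h.le), if_pos h'.le]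
    grind
  · norm_num at ht
  · filter_upwards [eventually_gt_nhds h'] with u hu
    simp only [deadZone, deadZoneSlope, if_neg (not_lt.2 h.le), if_neg (not_le.2 h')]
    grind

local notation "ℝ²" => EuclideanSpace ℝ (Fin 2)

theorem EuclideanSpace.real_inner_eq_sum {ι : Type*} [Fintype ι] (p q : EuclideanSpace ℝ ι) :
    ⟪p, q⟫ = ∑ i, p i * q i := by
  simp [PiLp.inner_apply, mul_comm]

theorem exU_eq_sum (x : ℝ²) : exU x = ∑ i, deadZone (x i) := by
  rw [Fin.sum_univ_two]
  rfl

theorem lipschitzWith_exU : LipschitzWith 2 exU := by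
  have h : ∀ i : Fin 2, LipschitzWith 1 fun x : ℝ² => deadZone (x i) := fun i =>
    LipschitzWith.of_dist_le_mul fun x y => by
      simpa using (lipschitzWith_deadZone.dist_le_mul (x i) (y i)).trans
        (by simpa using PiLp.dist_apply_le x y i)
  have := (h 0).add (h 1)
  rwa [one_add_one_eq_two] at this

theorem mem_cGrad_exU {x p : ℝ²} (hp : ∀ i u, deadZone (x i) + p i * (u - x i) ≤ deadZone u) :
    p ∈ cGrad exU x :=
  mem_cGrad_of_subgradient lipschitzWith_exU fun w => by
    simp only [exU_eq_sum, EuclideanSpace.real_inner_eq_sum, PiLp.sub_apply,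
      ← Finset.sum_add_distrib]
    exact Finset.sum_le_sum fun i _ => hp i (w i)

def exUGrad (x : ℝ²) : ℝ² := WithLp.toLp 2 fun i => deadZoneSlope (x i)

theorem exU_eventuallyEq {x : ℝ²} (hx : ∀ i, |x i| ≠ 1) :
    ∀ᶠ w in 𝓝 x, exU w = exU x + ⟪exUGrad x, w - x⟫ := by
  have h : ∀ i, ∀ᶠ w in 𝓝 x,
      deadZone (w i) = deadZone (x i) + deadZoneSlope (x i) * (w i - x i) := fun i =>
    ((PiLp.continuous_apply 2 _ i).tendsto x).eventually (deadZone_eventuallyEq (hx i))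
  filter_upwards [eventually_all.2 h] with w hw
  simp only [exU_eq_sum, EuclideanSpace.real_inner_eq_sum, PiLp.sub_apply, hw, exUGrad,
    Finset.sum_add_distrib]

theorem GRedA_exU_exF_of_forall_abs_ne {x : ℝ²} (hx : ∀ i, |x i| ≠ 1) :
    GRedA exU exF x = exF x :=
  GRedA_eq_self_of_cGrad_subset_singleton
    (cGrad_subset_singleton_of_eventuallyEq (exU_eventuallyEq hx))

theorem abs_le_one_of_mem_exH {y h : ℝ} (hh : h ∈ exH y) : |h| ≤ 1 := by
  unfold exH at hh
  split_ifs at hh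
  · exact abs_le.2 hh
  · simp [mem_singleton_iff.1 hh]

theorem eq_zero_of_mem_exH {y h : ℝ} (hh : h ∈ exH y) (hy : |y| ≠ 1) : h = 0 := by
  rwa [exH, if_neg hy, mem_singleton_iff] at hh

theorem forall_abs_ne_of_mem_exF {x q : ℝ²} (hq : q ∈ exF x) (h : ∀ i, |x i| = 1 → q i = 0) :
    ∀ i, |x i| ≠ 1 := by
  obtain ⟨⟨a, ha, h₀⟩, ⟨b, hb, h₁⟩⟩ := hq
  have ha' := abs_le.1 (abs_le_one_of_mem_exH ha)
  have hb' := abs_le.1 (abs_le_one_of_mem_exH hb)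
  have hx₀ : |x 0| ≠ 1 := by
    intro hx₀
    have hq₀ := h 0 hx₀
    by_cases hx₁ : |x 1| = 1
    · have hq₁ := h 1 hx₁
      rcases (abs_eq zero_le_one).1 hx₀ with e₀ | e₀ <;>
        rcases (abs_eq zero_le_one).1 hx₁ with e₁ | e₁ <;> linarith
    · have : x 1 = x 0 := by linarith [eq_zero_of_mem_exH ha hx₁]
      exact hx₁ (this ▸ hx₀)
  have hx₁ : |x 1| ≠ 1 := by
    intro hx₁
    have : x 0 = -x 1 := by linarith [h 1 hx₁, eq_zero_of_mem_exH hb hx₀]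
    exact hx₀ (by rw [this, abs_neg, hx₁])
  exact Fin.forall_fin_two.2 ⟨hx₀, hx₁⟩

theorem GRedA_exU_exF_eq_empty {x : ℝ²} (hx : ∃ i, |x i| = 1) : GRedA exU exF x = ∅ := by
  refine eq_empty_iff_forall_notMem.2 fun q hq => ?_
  obtain ⟨i, hi, hqi⟩ : ∃ i, |x i| = 1 ∧ q i ≠ 0 := by
    by_contra! h
    obtain ⟨i, hi⟩ := hx
    exact forall_abs_ne_of_mem_exF hq.1 h i hi
  have hxi : x i ≠ 0 := by rintro h; simp [h] at hi
  -- on the line `|x i| = 1` both `0` and `x i` are subgradients of `deadZone` at `x i`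
  refine notMem_GRedA_of_inner_ne (p := exUGrad x)
    (p' := exUGrad x + EuclideanSpace.single i (x i)) ?_ ?_ ?_ hq
  · exact mem_cGrad_exU fun j u => deadZone_add_slope_mul_le _ _
  · refine mem_cGrad_exU fun j u => ?_
    rcases eq_or_ne j i with rfl | hj
    · simpa [exUGrad, deadZoneSlope_eq_zero hi] using deadZone_add_mul_le hi u
    · simpa [exUGrad, hj] using deadZone_add_slope_mul_le (x j) u
  · rw [inner_add_left, EuclideanSpace.inner_single_left]
    simpa using mul_ne_zero hxi hqi

def exA (x : ℝ²) : ℝ² := !₂[-x 0 + x 1, -x 0 - x 1]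

theorem exA_mem_exF (x : ℝ²) : exA x ∈ exF x := by
  have h₀ : ∀ y, (0 : ℝ) ∈ exH y := fun y => by
    unfold exH; split_ifs <;> simp
  exact ⟨⟨0, h₀ _, by simp [exA]⟩, ⟨0, h₀ _, by simp [exA]⟩⟩

theorem eq_exA_of_mem_exF {x q : ℝ²} (hq : q ∈ exF x) (h : ∀ i, |x i| = 1 → q i = 0) :
    q = exA x := by
  have hx := forall_abs_ne_of_mem_exF hq h
  obtain ⟨⟨a, ha, h₀⟩, ⟨b, hb, h₁⟩⟩ := hq
  rw [eq_zero_of_mem_exH ha (hx 1), add_zero] at h₀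
  rw [eq_zero_of_mem_exH hb (hx 0), add_zero] at h₁
  ext i
  fin_cases i <;> simp [exA, h₀, h₁]

theorem IsSolOn.ae_eq_exA {x x' : ℝ → ℝ²} {I : Set ℝ} (hx : IsSolOn (auton exF) x x' I) :
    ∀ᵐ t, t ∈ I → x' t = exA (x t) := by
  have hline : ∀ i, ∀ᵐ t, |x t i| = 1 → HasDerivAt x (x' t) t → x' t i = 0 := fun i => by
    filter_upwards [ae_eq_zero_of_hasDerivAt_of_eq (fun t => x t i) (fun t => x' t i) 1,
      ae_eq_zero_of_hasDerivAt_of_eq (fun t => x t i) (fun t => x' t i) (-1)]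
      with t h₁ hneg habs hder
    have hderi : HasDerivAt (fun t => x t i) (x' t i) t :=
      (PiLp.hasFDerivAt_apply 2 (x t) i).comp_hasDerivAt t hder
    rcases (abs_eq zero_le_one).1 habs with h | h
    exacts [h₁ h hderi, hneg h hderi]
  filter_upwards [hx.2.1, ae_all_iff.2 hline] with t hsol hline ht
  obtain ⟨hder, hmem⟩ := hsol ht
  exact eq_exA_of_mem_exF hmem fun i hi => hline i hi hder

theorem real_inner_exA_self (w : ℝ²) : ⟪exA w, w⟫ = -‖w‖ ^ 2 := by
  simp [EuclideanSpace.real_inner_eq_sum, EuclideanSpace.real_norm_sq_eq, Fin.sum_univ_two, exA]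
  ring

theorem norm_exA_sq (w : ℝ²) : ‖exA w‖ ^ 2 = 2 * ‖w‖ ^ 2 := by
  simp [EuclideanSpace.real_norm_sq_eq, Fin.sum_univ_two, exA]
  ring

theorem exA_sub (u v : ℝ²) : exA u - exA v = exA (u - v) := by
  ext i
  fin_cases i <;> simp [exA] <;> ring

theorem lipschitzWith_exA : LipschitzWith 2 exA := by
  refine LipschitzWith.of_dist_le_mul fun u v => ?_
  rw [dist_eq_norm, dist_eq_norm, exA_sub, NNReal.coe_ofNat]
  have := norm_exA_sq (u - v)
  nlinarith [norm_nonneg (exA (u - v)), norm_nonneg (u - v)]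

def rotCW (z : ℝ²) : ℝ² := !₂[z 1, -z 0]

/-- The flow of `ẋ = exA x`, from `exA = rotCW - 1` and `rotCW ∘ rotCW = -1`. -/
def exSol (z : ℝ²) (t : ℝ) : ℝ² := Real.exp (-t) • (Real.cos t • z + Real.sin t • rotCW z)

theorem exSol_zero (z : ℝ²) : exSol z 0 = z := by
  simp [exSol]

theorem hasDerivAt_exSol (z : ℝ²) (t : ℝ) : HasDerivAt (exSol z) (exA (exSol z t)) t := by
  have hexp : HasDerivAt (fun s => Real.exp (-s)) (Real.exp (-t) * -1) t :=
    (Real.hasDerivAt_exp (-t)).comp t (hasDerivAt_neg t)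
  have hrot : HasDerivAt (fun s => Real.cos s • z + Real.sin s • rotCW z)
      (-Real.sin t • z + Real.cos t • rotCW z) t :=
    ((Real.hasDerivAt_cos t).smul_const z).add ((Real.hasDerivAt_sin t).smul_const (rotCW z))
  refine (hexp.smul hrot).congr_deriv ?_
  ext i
  fin_cases i <;> simp [exSol, exA, rotCW] <;> ring

theorem norm_exSol (z : ℝ²) (t : ℝ) : ‖exSol z t‖ = Real.exp (-t) * ‖z‖ := by
  have h : ‖Real.cos t • z + Real.sin t • rotCW z‖ ^ 2 = ‖z‖ ^ 2 := by
    simp [EuclideanSpace.real_norm_sq_eq, Fin.sum_univ_two, rotCW]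
    linear_combination (z 0 ^ 2 + z 1 ^ 2) * Real.sin_sq_add_cos_sq t
  rw [exSol, norm_smul, Real.norm_of_nonneg (Real.exp_pos _).le,
    (pow_left_inj₀ (norm_nonneg _) (norm_nonneg _) two_ne_zero).1 h]

theorem IsMaxSol.eq_exSol {x x' : ℝ → ℝ²} {I : Set ℝ} (hx : IsMaxSol (auton exF) x x' 0 I) :
    I = Ici 0 ∧ ∀ t ∈ I, x t = exSol (x 0) t := by
  have hsol : ∀ t ∈ I, x t = exSol (x 0) t :=
    hx.2.1.eqOn_of_ae_eq hx.1 lipschitzWith_exA hx.2.1.ae_eq_exA (hasDerivAt_exSol _)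
      (exSol_zero _).symm
  refine ⟨hx.eq_Ici (isSolOn_of_hasDerivAt lipschitzWith_exA.continuous (hasDerivAt_exSol _)
    exA_mem_exF _) fun t ht => (hsol t ht).symm, hsol⟩

/-- Example 2: the reduction `G_{exU}^{exF}` equals `exF(x)` off the
lines `|xᵢ| = 1` and is empty on them; consequently every solution satisfies
`⟪ẋ(t), x(t)⟫ = −‖x(t)‖²` a.e., and `ẋ ∈ exF(x)` is globally asymptotically stable at
`x = 0`. -/
theorem stmt18 :
    (∀ x : EuclideanSpace ℝ (Fin 2), |x 0| ≠ 1 → |x 1| ≠ 1 → GRedA exU exF x = exF x) ∧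
    (∀ x : EuclideanSpace ℝ (Fin 2), (|x 0| = 1 ∨ |x 1| = 1) → GRedA exU exF x = ∅) ∧
    (∀ x x' : ℝ → EuclideanSpace ℝ (Fin 2), ∀ I : Set ℝ, IsSolOn (auton exF) x x' I →
      ∀ᵐ t, t ∈ I → (inner ℝ (x' t) (x t) : ℝ) = -‖x t‖ ^ 2) ∧
    ((∀ ε > 0, ∃ δ > 0, ∀ x x' I, IsMaxSol (auton exF) x x' 0 I →
        x 0 ∈ closedBall (0 : EuclideanSpace ℝ (Fin 2)) δ →
        I = Ici (0 : ℝ) ∧ ∀ t ∈ I, x t ∈ closedBall (0 : EuclideanSpace ℝ (Fin 2)) ε) ∧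
      ∀ x x' I, IsMaxSol (auton exF) x x' 0 I →
        I = Ici (0 : ℝ) ∧ Tendsto x atTop (𝓝 (0 : EuclideanSpace ℝ (Fin 2)))) := by
  refine ⟨fun x h₀ h₁ => GRedA_exU_exF_of_forall_abs_ne (Fin.forall_fin_two.2 ⟨h₀, h₁⟩),
    fun x hx => GRedA_exU_exF_eq_empty (Fin.exists_fin_two.2 hx), fun x x' I hx => ?_,
    fun ε hε => ⟨ε, hε, fun x x' I hx hx₀ => ?_⟩, fun x x' I hx => ?_⟩
  · filter_upwards [hx.ae_eq_exA] with t ht htI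
    rw [ht htI, real_inner_exA_self]
  · obtain ⟨hI, hsol⟩ := hx.eq_exSol
    refine ⟨hI, fun t ht => ?_⟩
    rw [mem_closedBall_zero_iff] at hx₀ ⊢
    rw [hsol t ht, norm_exSol]
    have : Real.exp (-t) ≤ 1 := Real.exp_le_one_iff.2 (neg_nonpos.2 (hx.1.le_of_mem ht))
    exact (mul_le_of_le_one_left (norm_nonneg _) this).trans hx₀
  · obtain ⟨hI, hsol⟩ := hx.eq_exSol
    refine ⟨hI, tendsto_zero_iff_norm_tendsto_zero.2 ?_⟩
    have hdecay : Tendsto (fun t => Real.exp (-t) * ‖x 0‖) atTop (𝓝 0) := by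
      simpa using Real.tendsto_exp_neg_atTop_nhds_zero.mul_const ‖x 0‖
    refine hdecay.congr' ?_
    filter_upwards [eventually_ge_atTop 0] with t ht
    rw [hsol t (hI ▸ ht), norm_exSol]
end
end
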